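/- For every L-sentence φ: SAPP ⊨ φ if and only if 𝒜* ⊨ φ, where 𝒜* is the L-structure with universe {(a,b) ∈ ℝ × ℝ : a ≠ 0 and b ≠ 0} and O interpreted by O((a,b),(c,d)) iff a·c = −1. -/

import Mathlib

/-!
In a model of SAPP, call `x` and `y` parallel (`Par x y`) when they have the same `O`-neighbours.
Parallelism is an equivalence relation, `O` pairs each class with a single other class, every
class is infinite (λ₁) and there are infinitely many classes (λ₂). So two tuples with the same
pattern of `=`, `O` and parallelism between their entries can always be extended by one more point
each, keeping the pattern equal: the new point is parallel to an old one, orthogonal to an old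
one, or in a new class, and the infinitude axioms provide a counterpart. By induction on
formulas, such tuples satisfy the same formulas, so all nonempty models of SAPP are elementarily
equivalent; since `𝒜*` is one of them, consequence in SAPP is truth in `𝒜*`.
-/

open FirstOrder Language Structure BoundedFormula

/-- The relation symbols of the language `L`: a single binary relation `O`. -/
inductive PerpRel : ℕ → Type
  | o : PerpRel 2

/-- The first-order language with a single binary relation symbol `O`. -/
def L : Language := ⟨fun _ => Empty, PerpRel⟩
  deriving IsRelational

/-- The binary relation symbol `O` of `L`. -/
abbrev oSym : L.Relations 2 := .o

/-- `O(xᵢ, xⱼ)` as a bounded formula. -/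
def oBF {n : ℕ} (i j : Fin n) : L.BoundedFormula Empty n :=
  oSym.boundedFormula₂ (&i) (&j)

/-- Finite conjunction of a list of bounded formulas. -/
def andAll {n : ℕ} : List (L.BoundedFormula Empty n) → L.BoundedFormula Empty n
  | [] => ⊤
  | φ :: l => φ ⊓ andAll l

/-- λ₁ₙ : ∀y₁…∀yₙ∀s(O(s,y₁) ∧ … ∧ O(s,yₙ) → ∃t(t ≠ y₁ ∧ … ∧ t ≠ yₙ ∧ O(s,t))).
Variables: y₁,…,yₙ are de Bruijn indices 0,…,n-1, s is index n, t is index n+1. -/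
def lam1 (n : ℕ) : L.Sentence :=
  ((andAll ((List.finRange n).map fun i => oBF (Fin.last n) i.castSucc)).imp
    ((andAll ((List.finRange n).map fun i =>
        ∼((&(Fin.last (n + 1))) =' (&(i.castSucc.castSucc)))) ⊓
      oBF ((Fin.last n).castSucc) (Fin.last (n + 1))).ex)).alls

/-- λ₂ₙ : ∀y₁…∀yₙ∃s(¬O(s,y₁) ∧ … ∧ ¬O(s,yₙ)).
Variables: y₁,…,yₙ are de Bruijn indices 0,…,n-1, s is index n. -/
def lam2 (n : ℕ) : L.Sentence :=
  ((andAll ((List.finRange n).map fun i => ∼(oBF (Fin.last n) i.castSucc))).ex).alls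

/-- λ₃ : ∀x ¬O(x,x). -/
def lam3 : L.Sentence := (∼(oBF (0 : Fin 1) 0)).alls

/-- λ₄ : ∀x∀y(O(x,y) → O(y,x)). -/
def lam4 : L.Sentence := ((oBF (0 : Fin 2) 1).imp (oBF (1 : Fin 2) 0)).alls

/-- λ₅ : ∀x∃y O(x,y). -/
def lam5 : L.Sentence := ((oBF (0 : Fin 2) 1).ex).alls

/-- λ₆ : ∀x∀y∀z∀t(O(x,z) ∧ O(y,z) ∧ O(x,t) → O(y,t)). -/
def lam6 : L.Sentence :=
  ((oBF (0 : Fin 4) 2 ⊓ oBF (1 : Fin 4) 2 ⊓ oBF (0 : Fin 4) 3).imp (oBF (1 : Fin 4) 3)).alls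

/-- The theory SAPP. -/
def SAPP : L.Theory :=
  {φ | ∃ n, 1 ≤ n ∧ φ = lam1 n} ∪ {φ | ∃ n, 2 ≤ n ∧ φ = lam2 n} ∪ {lam3, lam4, lam5, lam6}

/-- The structure 𝒜*: pairs (a,b) of nonzero reals (coordinatizing the lines y = ax + b not
parallel to a coordinate axis and not through the origin), with O((a,b),(c,d)) iff a·c = −1. -/
abbrev AStar : Type := {p : ℝ × ℝ // p.1 ≠ 0 ∧ p.2 ≠ 0}

instance : L.Structure AStar where
  RelMap | .o => fun x => (x 0).val.1 * (x 1).val.1 = -1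

section Axioms
variable {M : Type*} [L.Structure M]

def Orth (x y : M) : Prop := RelMap oSym ![x, y]

@[simp] lemma realize_oBF {n : ℕ} (i j : Fin n) (v : Empty → M) (xs : Fin n → M) :
    (oBF i j).Realize v xs ↔ Orth (xs i) (xs j) := by
  simp [oBF, Orth]

@[simp] lemma realize_andAll {n : ℕ} (l : List (L.BoundedFormula Empty n)) (v : Empty → M)
    (xs : Fin n → M) : (andAll l).Realize v xs ↔ ∀ φ ∈ l, φ.Realize v xs := by
  induction l with
  | nil => simp [andAll]
  | cons φ l ih => simp [andAll, ih]

lemma realize_lam1 (n : ℕ) :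
    (M ⊨ lam1 n) ↔ ∀ (ys : Fin n → M) (s : M), (∀ i, Orth s (ys i)) →
      ∃ t, (∀ i, t ≠ ys i) ∧ Orth s t := by
  simp only [lam1, Sentence.Realize, realize_alls]
  rw [← (Fin.snocEquiv fun _ => M).forall_congr_right, Prod.forall, forall_comm]
  simp [Fin.snocEquiv]

lemma realize_lam2 (n : ℕ) :
    (M ⊨ lam2 n) ↔ ∀ ys : Fin n → M, ∃ s, ∀ i, ¬ Orth s (ys i) := by
  simp [lam2, Sentence.Realize]

lemma realize_lam3 : (M ⊨ lam3) ↔ ∀ x : M, ¬ Orth x x := by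
  simp [lam3, Sentence.Realize, Fin.forall_fin_succ_pi]

lemma realize_lam4 : (M ⊨ lam4) ↔ ∀ x y : M, Orth x y → Orth y x := by
  simp [lam4, Sentence.Realize, Fin.forall_fin_succ_pi]

lemma realize_lam5 : (M ⊨ lam5) ↔ ∀ x : M, ∃ y, Orth x y := by
  simp [lam5, Sentence.Realize, Fin.forall_fin_succ_pi, Fin.snoc]

lemma realize_lam6 :
    (M ⊨ lam6) ↔ ∀ x y z t : M, Orth x z → Orth y z → Orth x t → Orth y t := by
  simp [lam6, Sentence.Realize, Fin.forall_fin_succ_pi]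
  rfl

end Axioms

section Model
variable {M : Type*} [L.Structure M] [SAPP.Model M]

lemma orth_irrefl (x : M) : ¬ Orth x x :=
  realize_lam3.1 (SAPP.realize_sentence_of_mem (by simp [SAPP])) x

lemma Orth.symm {x y : M} (h : Orth x y) : Orth y x :=
  realize_lam4.1 (SAPP.realize_sentence_of_mem (by simp [SAPP])) x y h

lemma exists_orth (x : M) : ∃ y, Orth x y :=
  realize_lam5.1 (SAPP.realize_sentence_of_mem (by simp [SAPP])) x

lemma Orth.orth_of_orth_of_orth {x y z t : M} (hxz : Orth x z) (hyz : Orth y z) (hxt : Orth x t) :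
    Orth y t :=
  realize_lam6.1 (SAPP.realize_sentence_of_mem (by simp [SAPP])) x y z t hxz hyz hxt

/- `λ₁` only applies to orthogonals of `s`: the `ys i` not orthogonal to `s` are replaced by a
fixed orthogonal `y₀`, which `t` avoids as well. -/
lemma exists_orth_forall_ne {n : ℕ} (s : M) (ys : Fin n → M) :
    ∃ t, (∀ i, t ≠ ys i) ∧ Orth s t := by
  classical
  obtain ⟨y₀, hy₀⟩ := exists_orth s
  let zs : Fin (n + 1) → M := Fin.cons y₀ fun i => if Orth s (ys i) then ys i else y₀
  have hzs : ∀ i, Orth s (zs i) := Fin.cases hy₀ fun i => by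
    by_cases h : Orth s (ys i) <;> simp [zs, h, hy₀]
  obtain ⟨t, hne, hst⟩ := (realize_lam1 (n + 1)).1
    (SAPP.realize_sentence_of_mem (Or.inl (Or.inl ⟨n + 1, by omega, rfl⟩))) zs s hzs
  refine ⟨t, fun i hti => hne i.succ ?_, hst⟩
  have : Orth s (ys i) := hti ▸ hst
  simp [zs, this, hti]

lemma exists_forall_not_orth [Nonempty M] {n : ℕ} (ys : Fin n → M) :
    ∃ s, ∀ i, ¬ Orth s (ys i) := by
  obtain ⟨m⟩ := ‹Nonempty M›
  obtain ⟨s, hs⟩ := (realize_lam2 (n + 2)).1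
    (SAPP.realize_sentence_of_mem (Or.inl (Or.inr ⟨n + 2, by omega, rfl⟩)))
    (Fin.snoc (Fin.snoc ys m) m)
  exact ⟨s, fun i => by simpa [Fin.snoc_castSucc] using hs i.castSucc.castSucc⟩

end Model

section Parallel
variable {M : Type*} [L.Structure M]

def Par (x y : M) : Prop := ∀ z, Orth x z ↔ Orth y z

lemma Par.refl (x : M) : Par x x := fun _ => Iff.rfl

lemma Par.symm {x y : M} (h : Par x y) : Par y x := fun z => (h z).symm

lemma Par.trans {x y z : M} (hxy : Par x y) (hyz : Par y z) : Par x z :=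
  fun w => (hxy w).trans (hyz w)

def pairType (x y : M) : Prop × Prop × Prop := (x = y, Orth x y, Par x y)

lemma pairType_of_not_orth_of_not_par {a x : M} (hax : ¬ Orth a x) (hpar : ¬ Par a x) :
    pairType a x = (False, False, False) := by
  have : a ≠ x := by rintro rfl; exact hpar (Par.refl a)
  simp [pairType, this, hax, hpar]

lemma pairType_of_par {a c x : M} (hac : Par a c) (hax : a ≠ x) :
    pairType a x = (False, (pairType c x).2) := by
  simp only [pairType, hax, Prod.mk.injEq, eq_iff_iff]
  exact ⟨trivial, hac x, ⟨hac.symm.trans, hac.trans⟩⟩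

variable [SAPP.Model M]

lemma par_of_orth_of_orth {s u v : M} (hu : Orth s u) (hv : Orth s v) : Par u v := fun _ =>
  ⟨hu.symm.orth_of_orth_of_orth hv.symm, hv.symm.orth_of_orth_of_orth hu.symm⟩

lemma Orth.orth_iff_par {a c : M} (hac : Orth a c) (x : M) : Orth a x ↔ Par c x :=
  ⟨par_of_orth_of_orth hac, fun hcx => ((hcx a).1 hac.symm).symm⟩

lemma Orth.par_iff_orth {a c : M} (hac : Orth a c) (x : M) : Par a x ↔ Orth c x :=
  ⟨fun hax => ((hax c).1 hac).symm, fun hcx => (par_of_orth_of_orth hcx hac.symm).symm⟩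

lemma pairType_self (x : M) : pairType x x = (True, False, True) := by
  simp [pairType, orth_irrefl, Par.refl]

lemma pairType_comm (x y : M) : pairType x y = pairType y x := by
  simp only [pairType, Prod.mk.injEq, eq_iff_iff]
  exact ⟨eq_comm, ⟨Orth.symm, Orth.symm⟩, ⟨Par.symm, Par.symm⟩⟩

lemma pairType_of_orth {a c x : M} (hac : Orth a c) (hax : a ≠ x) :
    pairType a x = (False, (pairType c x).2.swap) := by
  simp only [pairType, hax, Prod.swap_prod_mk, Prod.mk.injEq, eq_iff_iff]
  exact ⟨trivial, hac.orth_iff_par x, hac.par_iff_orth x⟩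

lemma exists_par_forall_ne {n : ℕ} (x : M) (ys : Fin n → M) :
    ∃ t, (∀ i, t ≠ ys i) ∧ Par t x := by
  obtain ⟨z, hxz⟩ := exists_orth x
  obtain ⟨t, hne, hzt⟩ := exists_orth_forall_ne z ys
  exact ⟨t, hne, par_of_orth_of_orth hzt hxz.symm⟩

lemma exists_forall_not_orth_not_par [Nonempty M] {n : ℕ} (ys : Fin n → M) :
    ∃ s, ∀ i, ¬ Orth s (ys i) ∧ ¬ Par s (ys i) := by
  choose zs hzs using fun i => exists_orth (ys i)
  obtain ⟨s, hs⟩ := exists_forall_not_orth (Fin.append ys zs)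
  have hsys : ∀ i, ¬ Orth s (ys i) := fun i => by
    simpa only [Fin.append_left] using hs (Fin.castAdd n i)
  have hszs : ∀ i, ¬ Orth s (zs i) := fun i => by
    simpa only [Fin.append_right] using hs (Fin.natAdd n i)
  exact ⟨s, fun i => ⟨hsys i, fun hpar => hszs i ((hpar (zs i)).2 (hzs i))⟩⟩

end Parallel

section BackAndForth
variable {M N : Type*} [L.Structure M] [L.Structure N]

def SamePairTypes {n : ℕ} (p : Fin n → M) (q : Fin n → N) : Prop :=
  ∀ i j, pairType (p i) (p j) = pairType (q i) (q j)

lemma SamePairTypes.symm {n : ℕ} {p : Fin n → M} {q : Fin n → N} (h : SamePairTypes p q) :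
    SamePairTypes q p :=
  fun i j => (h i j).symm

variable [SAPP.Model M] [SAPP.Model N]

lemma SamePairTypes.snoc {n : ℕ} {p : Fin n → M} {q : Fin n → N} (h : SamePairTypes p q)
    {a : M} {b : N} (hab : ∀ j, pairType a (p j) = pairType b (q j)) :
    SamePairTypes (Fin.snoc p a) (Fin.snoc q b) := by
  intro i j
  induction i using Fin.lastCases <;> induction j using Fin.lastCases <;>
    simp only [Fin.snoc_last, Fin.snoc_castSucc]
  · rw [pairType_self, pairType_self]
  · exact hab _
  · rw [pairType_comm, hab, pairType_comm]
  · exact h _ _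

/- A new point is parallel to an old one, orthogonal to an old one, or in a class of its own;
the matching point of `N` is found in the same position, avoiding the old points. -/
lemma SamePairTypes.exists_pairType_eq [Nonempty N] {n : ℕ} {p : Fin n → M} {q : Fin n → N}
    (h : SamePairTypes p q) (a : M) : ∃ b : N, ∀ j, pairType a (p j) = pairType b (q j) := by
  by_cases hold : ∃ i, a = p i
  · obtain ⟨i, rfl⟩ := hold
    exact ⟨q i, h i⟩
  push Not at hold
  by_cases hpar : ∃ i, Par a (p i)
  · obtain ⟨i, hi⟩ := hpar
    obtain ⟨b, hbq, hb⟩ := exists_par_forall_ne (q i) q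
    exact ⟨b, fun j => by rw [pairType_of_par hi (hold j), pairType_of_par hb (hbq j), h i j]⟩
  by_cases horth : ∃ i, Orth a (p i)
  · obtain ⟨i, hi⟩ := horth
    obtain ⟨b, hbq, hb⟩ := exists_orth_forall_ne (q i) q
    exact ⟨b, fun j => by
      rw [pairType_of_orth hi (hold j), pairType_of_orth hb.symm (hbq j), h i j]⟩
  push Not at hpar horth
  obtain ⟨b, hb⟩ := exists_forall_not_orth_not_par q
  exact ⟨b, fun j => by rw [pairType_of_not_orth_of_not_par (horth j) (hpar j),
    pairType_of_not_orth_of_not_par (hb j).1 (hb j).2]⟩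

end BackAndForth

lemma FirstOrder.Language.Term.exists_eq_var {L' : Language} [L'.IsRelational] {α : Type*}
    (t : L'.Term α) : ∃ a, t = var a := by
  cases t with
  | var a => exact ⟨a, rfl⟩
  | func f _ => exact isEmptyElim f

lemma exists_rel_eq_oBF {n l : ℕ} (R : L.Relations l) (ts : Fin l → L.Term (Empty ⊕ Fin n)) :
    ∃ i j, BoundedFormula.rel R ts = oBF i j := by
  cases R
  obtain ⟨(⟨⟨⟩⟩ | i), hi⟩ := (ts 0).exists_eq_var
  obtain ⟨(⟨⟨⟩⟩ | j), hj⟩ := (ts 1).exists_eq_var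
  refine ⟨i, j, congrArg _ (funext fun k => ?_)⟩
  fin_cases k <;> simp [hi, hj]

section Transfer
variable {M N : Type*} [L.Structure M] [L.Structure N] [SAPP.Model M] [SAPP.Model N] [Nonempty M]
  [Nonempty N]

lemma realize_iff_of_samePairTypes {n : ℕ} (φ : L.BoundedFormula Empty n) (v : Empty → M)
    (w : Empty → N) {p : Fin n → M} {q : Fin n → N} (h : SamePairTypes p q) :
    φ.Realize v p ↔ φ.Realize w q := by
  induction φ with
  | falsum => rfl
  | equal t₁ t₂ =>
    obtain ⟨(⟨⟨⟩⟩ | i), rfl⟩ := t₁.exists_eq_var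
    obtain ⟨(⟨⟨⟩⟩ | j), rfl⟩ := t₂.exists_eq_var
    simpa [BoundedFormula.Realize, pairType] using (congrArg Prod.fst (h i j)).to_iff
  | rel R ts =>
    obtain ⟨i, j, hij⟩ := exists_rel_eq_oBF R ts
    simpa [hij, pairType] using (congrArg (·.2.1) (h i j)).to_iff
  | imp φ ψ ihφ ihψ => simp only [realize_imp, ihφ h, ihψ h]
  | all φ ih =>
    simp only [realize_all]
    constructor
    · intro hM b
      obtain ⟨a, ha⟩ := h.symm.exists_pairType_eq b
      exact (ih (h.symm.snoc ha).symm).1 (hM a)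
    · intro hN a
      obtain ⟨b, hb⟩ := h.exists_pairType_eq a
      exact (ih (h.snoc hb)).2 (hN b)

theorem elementarilyEquivalent_of_models_SAPP : M ≅[L] N :=
  elementarilyEquivalent_iff.2 fun φ =>
    realize_iff_of_samePairTypes φ default default fun i => i.elim0

end Transfer

namespace AStar

instance : Nonempty AStar := ⟨⟨(1, 1), one_ne_zero, one_ne_zero⟩⟩

lemma orth_iff (x y : AStar) : Orth x y ↔ x.1.1 * y.1.1 = -1 := Iff.rfl

lemma exists_orth_snd_eq (x : AStar) {b : ℝ} (hb : b ≠ 0) :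
    ∃ y : AStar, Orth x y ∧ y.1.2 = b :=
  ⟨⟨(-x.1.1⁻¹, b), by simpa using x.2.1, hb⟩, by simp [orth_iff, x.2.1], rfl⟩

lemma models_lam1 (n : ℕ) : AStar ⊨ lam1 n := by
  classical
  refine (realize_lam1 n).2 fun ys s _ => ?_
  obtain ⟨b, hb⟩ := Infinite.exists_notMem_finset
    (insert 0 (Finset.univ.image fun i => (ys i).1.2))
  simp only [Finset.mem_insert, Finset.mem_image, Finset.mem_univ, true_and, not_or,
    not_exists] at hb
  obtain ⟨t, hst, htb⟩ := exists_orth_snd_eq s hb.1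
  exact ⟨t, fun i hti => hb.2 i (hti ▸ htb), hst⟩

lemma models_lam2 (n : ℕ) : AStar ⊨ lam2 n := by
  classical
  refine (realize_lam2 n).2 fun ys => ?_
  obtain ⟨a, ha⟩ := Infinite.exists_notMem_finset
    (insert 0 (Finset.univ.image fun i => -((ys i).1.1)⁻¹))
  simp only [Finset.mem_insert, Finset.mem_image, Finset.mem_univ, true_and, not_or,
    not_exists] at ha
  refine ⟨⟨(a, 1), ha.1, one_ne_zero⟩, fun i h => ha.2 i ?_⟩
  rw [orth_iff] at h
  have hy : (ys i).1.1 ≠ 0 := (ys i).2.1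
  field_simp
  linarith

instance : SAPP.Model AStar := by
  refine ⟨?_⟩
  rintro φ ((⟨n, -, rfl⟩ | ⟨n, -, rfl⟩) | (rfl | rfl | rfl | rfl))
  · exact models_lam1 n
  · exact models_lam2 n
  · exact realize_lam3.2 fun x h => by
      nlinarith [(orth_iff x x).1 h, mul_self_nonneg x.1.1]
  · exact realize_lam4.2 fun x y h => by rw [orth_iff, mul_comm]; exact h
  · exact realize_lam5.2 fun x => (exists_orth_snd_eq x one_ne_zero).imp fun _ => And.left
  · exact realize_lam6.2 fun x y z t hxz hyz hxt => by
      rw [orth_iff] at *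
      rwa [← mul_right_cancel₀ z.2.1 (hxz.trans hyz.symm)]

end AStar

/-- an L-sentence is a logical consequence of SAPP iff it holds in 𝒜*. -/
theorem statement_13 (φ : L.Sentence) : SAPP ⊨ᵇ φ ↔ AStar ⊨ φ := by
  rw [Theory.models_sentence_iff]
  refine ⟨fun h => h (Theory.ModelType.of SAPP AStar), fun h M => ?_⟩
  exact (elementarilyEquivalent_of_models_SAPP.realize_sentence φ).1 h
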